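/- arXiv:2212.14831 — 2 statements merged into one kernel-verified Lean document; each statement's English description precedes it below -/
import Mathlib

section
/- Let c be a standard Coxeter element of S_n. For 1 < i < j < n, the root (i,j) is c-charmed if and only if the chords connecting the circle positions of i,j and of i-1,j+1 cross, when the points 1,...,n are arranged on a circle in the cyclic order given by the cycle notation of c. -/
/-- The adjacent transposition `sᵢ = (i, i+1)` in the symmetric group on `Fin (n+1)`. -/
def adjSwap (n : ℕ) (i : Fin n) : Equiv.Perm (Fin (n+1)) :=
  Equiv.swap i.castSucc i.succ

/-- `c` is a standard Coxeter element of `S_{n+1}`. -/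
def IsStdCoxeter (n : ℕ) (c : Equiv.Perm (Fin (n+1))) : Prop :=
  ∃ l : List (Fin n), l.Nodup ∧ (∀ i, i ∈ l) ∧ c = (l.map (adjSwap n)).prod

/-- For a standard Coxeter element, an interior element `x` lies in `L_c` iff `x < c x`
and in `R_c` iff `c x < x`; a root `(i,j)` with `1 < i < j < n` is `c`-charmed iff
one of `i, j` is in `L_c` and the other in `R_c`. -/
def charmedRel (n : ℕ) (c : Equiv.Perm (Fin (n+1))) (i j : Fin (n+1)) : Prop :=
  (i < c i ∧ c j < j) ∨ (c i < i ∧ j < c j)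

/-- `t` lies strictly inside the cyclic arc from `p` to `q` (going in increasing
cyclic direction), where positions are taken modulo `N`. -/
def inArc {N : ℕ} (p q t : Fin N) : Prop := t ≠ p ∧ t - p < q - p

/-- With the points placed on a circle at positions given by `a` (the cycle notation of `c`),
the chords `{x,y}` and `{u,v}` cross iff exactly one of `u, v` lies strictly inside one of
the two open arcs determined by `x` and `y`. -/
def chordsCross {N : ℕ} (a : Fin N ≃ Fin N) (x y u v : Fin N) : Prop :=
  Xor' (inArc (a.symm x) (a.symm y) (a.symm u)) (inArc (a.symm x) (a.symm y) (a.symm v))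

/-!
Write `c` as a product of the adjacent transpositions, each used once. An interior value `y`
is moved only by `s_{y-1}` and `s_y`; whichever of them acts first pushes `y` across a cut that
no later factor crosses again, so `c⁻¹ y < y < c y` or `c y < y < c⁻¹ y`. Hence the sequence
`a 0 = 0, a 1, …, a n` has no interior local extremum: it increases up to the position `m` of
`n` and decreases after it. In such a unimodal arrangement a value smaller than both `i` and `j`
never sits strictly between their positions, while a value larger than both does exactly when
`m` does. Taking these values to be `i - 1` and `j + 1`, the two chords cross iff `m` separates
`i` from `j`, that is, iff one of them lies in `L_c` and the other in `R_c`.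
-/

open Equiv Set

section MulSwapMul

variable {α : Type*} [DecidableEq α] {P : α → Prop} {A B : Perm α} {u v : α}

lemma mul_swap_mul_apply_left_iff (hA : ∀ x, P (A x) ↔ P x) (hB : B u = u) :
    P ((A * swap u v * B) u) ↔ P v := by
  rw [Perm.mul_apply, Perm.mul_apply, hB, swap_apply_left, hA]

lemma mul_swap_mul_inv_apply_right_iff (hA : A v = v) (hB : ∀ x, P (B x) ↔ P x) :
    P ((A * swap u v * B)⁻¹ v) ↔ P u := by
  rw [mul_inv_rev, mul_inv_rev, swap_inv, Perm.mul_apply, Perm.mul_apply,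
    Perm.inv_eq_iff_eq.mpr hA.symm, swap_apply_right, ← hB, Perm.inv_def, apply_symm_apply]

end MulSwapMul

section AdjacentTranspositions

variable {n : ℕ}

lemma adjSwap_apply_le_castSucc_iff {i k : Fin n} (hik : i ≠ k) (x : Fin (n+1)) :
    adjSwap n i x ≤ k.castSucc ↔ x ≤ k.castSucc := by
  have hik' : (i : ℕ) ≠ k := Fin.val_ne_of_ne hik
  simp only [adjSwap, swap_apply_def]
  split_ifs <;> subst_vars <;> simp only [Fin.le_def, Fin.val_castSucc, Fin.val_succ] <;> omega

lemma prod_adjSwap_apply_le_castSucc_iff {k : Fin n} {l : List (Fin n)} (hk : k ∉ l)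
    (x : Fin (n+1)) : (l.map (adjSwap n)).prod x ≤ k.castSucc ↔ x ≤ k.castSucc := by
  induction l with
  | nil => rfl
  | cons i l ih =>
    rw [List.mem_cons, not_or] at hk
    rw [List.map_cons, List.prod_cons, Perm.mul_apply,
      adjSwap_apply_le_castSucc_iff (Ne.symm hk.1), ih hk.2]

lemma prod_adjSwap_apply_eq_self {d e : Fin n} (hde : d.succ = e.castSucc) {l : List (Fin n)}
    (hd : d ∉ l) (he : e ∉ l) : (l.map (adjSwap n)).prod e.castSucc = e.castSucc := by
  have hle := (prod_adjSwap_apply_le_castSucc_iff he e.castSucc).mpr le_rfl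
  have hgt := (prod_adjSwap_apply_le_castSucc_iff hd e.castSucc).not.mpr
    (by rw [← hde, not_le]; exact Fin.castSucc_lt_succ (i := d))
  rw [Fin.ext_iff] at hde
  simp only [Fin.le_def, Fin.val_castSucc, Fin.val_succ] at hle hgt hde
  exact Fin.ext (by simp only [Fin.val_castSucc]; omega)

lemma adjSwap_inv (i : Fin n) : (adjSwap n i)⁻¹ = adjSwap n i :=
  swap_inv _ _

lemma prod_map_adjSwap_inv (l : List (Fin n)) :
    (l.map (adjSwap n)).prod⁻¹ = (l.reverse.map (adjSwap n)).prod := by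
  simp [List.prod_inv_reverse, List.map_reverse, Function.comp_def, adjSwap_inv]

lemma lt_prod_apply_and_inv_apply_lt {d e : Fin n} (hde : d.succ = e.castSucc)
    {l₁ l₂ l₃ : List (Fin n)} (hl : (l₁ ++ d :: l₂ ++ e :: l₃).Nodup) :
    e.castSucc < ((l₁ ++ d :: l₂ ++ e :: l₃).map (adjSwap n)).prod e.castSucc ∧
      ((l₁ ++ d :: l₂ ++ e :: l₃).map (adjSwap n)).prod⁻¹ e.castSucc < e.castSucc := by
  rw [List.append_assoc, List.cons_append, List.nodup_middle, List.nodup_cons, ← List.append_assoc,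
    List.nodup_middle, List.nodup_cons] at hl
  obtain ⟨hd, he, -⟩ := hl
  simp only [List.mem_append, List.mem_cons, not_or] at hd he
  obtain ⟨⟨hd₁, hd₂⟩, hde', hd₃⟩ := hd
  obtain ⟨⟨he₁, he₂⟩, he₃⟩ := he
  constructor
  · have hσ : ((l₁ ++ d :: l₂ ++ e :: l₃).map (adjSwap n)).prod =
        ((l₁ ++ d :: l₂).map (adjSwap n)).prod * adjSwap n e * (l₃.map (adjSwap n)).prod := by
      simp only [List.map_append, List.map_cons, List.prod_append, List.prod_cons, mul_assoc]
    have key := mul_swap_mul_apply_left_iff (P := (· ≤ e.castSucc)) (v := e.succ)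
      (prod_adjSwap_apply_le_castSucc_iff (l := l₁ ++ d :: l₂) (by simp [*, Ne.symm hde']))
      (prod_adjSwap_apply_eq_self hde hd₃ he₃)
    rw [hσ]
    exact not_le.mp (key.not.mpr Fin.castSucc_lt_succ.not_ge)
  · have hσ : ((l₁ ++ d :: l₂ ++ e :: l₃).map (adjSwap n)).prod =
        (l₁.map (adjSwap n)).prod * swap d.castSucc e.castSucc *
          ((l₂ ++ e :: l₃).map (adjSwap n)).prod := by
      simp only [← hde, List.map_append, List.map_cons, List.prod_append, List.prod_cons, mul_assoc]
      rfl
    have key := mul_swap_mul_inv_apply_right_iff (P := (· ≤ d.castSucc)) (u := d.castSucc)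
      (prod_adjSwap_apply_eq_self hde hd₁ he₁)
      (prod_adjSwap_apply_le_castSucc_iff (l := l₂ ++ e :: l₃) (by simp [*]))
    rw [hσ]
    exact (key.mpr le_rfl).trans_lt (hde ▸ Fin.castSucc_lt_succ)

theorem IsStdCoxeter.inv_apply_lt_lt_apply_or_apply_lt_lt_inv_apply {c : Perm (Fin (n+1))}
    (hc : IsStdCoxeter n c) {y : Fin (n+1)} (hy₀ : 0 < y) (hy : y < Fin.last n) :
    (c⁻¹ y < y ∧ y < c y) ∨ (c y < y ∧ y < c⁻¹ y) := by
  obtain ⟨l, hl, hmem, rfl⟩ := hc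
  obtain ⟨e, rfl⟩ := Fin.exists_castSucc_eq.mpr hy.ne
  obtain ⟨d, hde⟩ := Fin.exists_succ_eq.mpr hy₀.ne'
  have hde' : d ≠ e := by rintro rfl; exact Fin.castSucc_lt_succ.ne' hde
  obtain ⟨s, t, rfl⟩ := List.append_of_mem (hmem e)
  have hd : d ∈ s ∨ d ∈ t := by simpa [hde'] using hmem d
  rcases hd with hd | hd
  · obtain ⟨s₁, s₂, rfl⟩ := List.append_of_mem hd
    obtain ⟨hup, hdown⟩ := lt_prod_apply_and_inv_apply_lt hde hl
    exact Or.inl ⟨hdown, hup⟩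
  · obtain ⟨t₁, t₂, rfl⟩ := List.append_of_mem hd
    -- `c⁻¹` is the product of the reversed word, in which `s_{y-1}` comes before `s_y`.
    have hrev : (s ++ e :: (t₁ ++ d :: t₂)).reverse =
        t₂.reverse ++ d :: t₁.reverse ++ e :: s.reverse := by
      simp
    obtain ⟨hup, hdown⟩ := lt_prod_apply_and_inv_apply_lt hde (hrev ▸ List.nodup_reverse.mpr hl)
    rw [← hrev, ← prod_map_adjSwap_inv] at hup hdown
    rw [inv_inv] at hdown
    exact Or.inr ⟨hdown, hup⟩

end AdjacentTranspositions

section Unimodal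

variable {α β : Type*} [LinearOrder α] [LinearOrder β] {f : α ≃ β} {m : α} {w x y z : β}

lemma symm_lt_symm_of_lt_of_le_peak (hmono : StrictMonoOn f (Iic m)) (hwx : w < x)
    (hw : f.symm w ≤ m) : f.symm w < f.symm x := by
  by_contra! h
  have := hmono.monotoneOn (h.trans hw) hw h
  rw [apply_symm_apply, apply_symm_apply] at this
  exact this.not_gt hwx

lemma symm_lt_symm_of_lt_of_peak_le (hanti : StrictAntiOn f (Ici m)) (hwx : w < x)
    (hw : m ≤ f.symm w) : f.symm x < f.symm w := by
  by_contra! h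
  have := hanti.antitoneOn hw (hw.trans h) h
  rw [apply_symm_apply, apply_symm_apply] at this
  exact this.not_gt hwx

lemma symm_notMem_uIoo_of_lt (hmono : StrictMonoOn f (Iic m)) (hanti : StrictAntiOn f (Ici m))
    (hwx : w < x) (hwy : w < y) : f.symm w ∉ uIoo (f.symm x) (f.symm y) := by
  rcases le_total (f.symm w) m with hw | hw
  · exact fun h ↦ (lt_min (symm_lt_symm_of_lt_of_le_peak hmono hwx hw)
      (symm_lt_symm_of_lt_of_le_peak hmono hwy hw)).asymm h.1
  · exact fun h ↦ (max_lt (symm_lt_symm_of_lt_of_peak_le hanti hwx hw)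
      (symm_lt_symm_of_lt_of_peak_le hanti hwy hw)).asymm h.2

lemma symm_mem_uIoo_iff_of_lt (hmono : StrictMonoOn f (Iic m)) (hanti : StrictAntiOn f (Ici m))
    (hxz : x < z) (hyz : y < z) :
    f.symm z ∈ uIoo (f.symm x) (f.symm y) ↔ m ∈ uIoo (f.symm x) (f.symm y) := by
  wlog hxy : f.symm x ≤ f.symm y generalizing x y
  · rw [uIoo_comm]
    exact this hyz hxz (le_of_not_ge hxy)
  rw [uIoo_of_le hxy, mem_Ioo, mem_Ioo]
  constructor
  · rintro ⟨hxz', hzy'⟩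
    constructor
    · by_contra! h
      exact (symm_lt_symm_of_lt_of_peak_le hanti hxz h).not_gt hxz'
    · by_contra! h
      exact (symm_lt_symm_of_lt_of_le_peak hmono hyz h).not_gt hzy'
  · rintro ⟨hxm, hmy⟩
    exact ⟨symm_lt_symm_of_lt_of_le_peak hmono hxz hxm.le,
      symm_lt_symm_of_lt_of_peak_le hanti hyz hmy.le⟩

end Unimodal

section Chords

variable {N : ℕ}

lemma inArc_iff {p q t : Fin N} (hpq : p ≠ q) (htp : t ≠ p) (htq : t ≠ q) :
    inArc p q t ↔ (t ∈ uIoo p q ↔ p < q) := by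
  have val_sub (a b : Fin N) :
      ((a - b : Fin N) : ℕ) = if b ≤ a then (a : ℕ) - b else N + a - b := by
    split_ifs with h
    exacts [Fin.coe_sub_iff_le.mpr h, Fin.coe_sub_iff_lt.mpr (not_le.mp h)]
  have htp' := Fin.val_ne_of_ne htp
  have htq' := Fin.val_ne_of_ne htq
  have ht := t.isLt
  have hq := q.isLt
  rcases hpq.lt_or_gt with h | h
  · simp only [uIoo_of_lt h, h, iff_true, inArc, mem_Ioo, Fin.lt_def, val_sub, Fin.le_def]
    rw [Fin.lt_def] at h
    split_ifs <;> omega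
  · simp only [uIoo_of_gt h, h.not_gt, iff_false, inArc, mem_Ioo, Fin.lt_def, val_sub, Fin.le_def]
    rw [Fin.lt_def] at h
    split_ifs <;> omega

lemma chordsCross_iff (a : Fin N ≃ Fin N) {x y u v : Fin N} (hxy : x ≠ y) (hux : u ≠ x)
    (huy : u ≠ y) (hvx : v ≠ x) (hvy : v ≠ y) :
    chordsCross a x y u v ↔
      Xor (a.symm u ∈ uIoo (a.symm x) (a.symm y)) (a.symm v ∈ uIoo (a.symm x) (a.symm y)) := by
  have hinj := a.symm.injective
  rw [chordsCross, inArc_iff (hinj.ne hxy) (hinj.ne hux) (hinj.ne huy),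
    inArc_iff (hinj.ne hxy) (hinj.ne hvx) (hinj.ne hvy)]
  show Xor _ _ ↔ _
  grind

end Chords

lemma Fin.orderSucc_eq_add_one {n : ℕ} {k : Fin (n+1)} (hk : k ≠ Fin.last n) :
    Order.succ k = k + 1 := by
  obtain ⟨i, rfl⟩ := Fin.exists_castSucc_eq.mpr hk
  rw [Fin.orderSucc_castSucc, Fin.coeSucc_eq_succ]

section CycleNotation

variable {n : ℕ} {c : Perm (Fin (n+1))} {a : Fin (n+1) ≃ Fin (n+1)}

lemma apply_strictly_between_neighbours (hc : IsStdCoxeter n c)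
    (hacyc : ∀ i, c (a i) = a (i + 1)) {k : Fin (n+1)} (h₀ : a (k + 1) ≠ 0)
    (hl : a (k + 1) ≠ Fin.last n) :
    (a k < a (k + 1) ∧ a (k + 1) < a (k + 1 + 1)) ∨
      (a (k + 1 + 1) < a (k + 1) ∧ a (k + 1) < a k) := by
  have h := hc.inv_apply_lt_lt_apply_or_apply_lt_lt_inv_apply (pos_iff_ne_zero.mpr h₀)
    (lt_of_le_of_ne (Fin.le_last _) hl)
  rwa [Perm.inv_eq_iff_eq.mpr (hacyc k).symm, hacyc] at h

lemma apply_lt_apply_add_one (hc : IsStdCoxeter n c) (ha0 : a 0 = 0)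
    (hacyc : ∀ i, c (a i) = a (i + 1)) (k : Fin (n+1)) (hk : k < a.symm (Fin.last n)) :
    a k < a (k + 1) := by
  induction k using Fin.induction with
  | zero =>
    have h := a.injective.ne (Fin.lt_add_one_iff.mpr (hk.trans_le (Fin.le_last _))).ne'
    rw [ha0] at h ⊢
    exact pos_iff_ne_zero.mpr h
  | succ i ih =>
    rw [← Fin.coeSucc_eq_succ] at hk ⊢
    have h₀ : a (i.castSucc + 1) ≠ 0 := by
      rw [← ha0, a.injective.ne_iff, Fin.coeSucc_eq_succ]
      exact Fin.succ_ne_zero i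
    have hl : a (i.castSucc + 1) ≠ Fin.last n := by
      rw [Ne, ← a.eq_symm_apply]
      exact hk.ne
    have hi := ih ((Fin.coeSucc_eq_succ ▸ Fin.castSucc_lt_succ).trans hk)
    exact ((apply_strictly_between_neighbours hc hacyc h₀ hl).resolve_right
      fun h ↦ hi.asymm h.2).2

lemma apply_add_one_lt_apply (hc : IsStdCoxeter n c) (ha0 : a 0 = 0)
    (hacyc : ∀ i, c (a i) = a (i + 1)) (k : Fin (n+1)) (hk : a.symm (Fin.last n) ≤ k)
    (hl : k ≠ Fin.last n) : a (k + 1) < a k := by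
  induction k using Fin.induction with
  | zero =>
    have h := a.apply_symm_apply (Fin.last n)
    rw [le_antisymm hk (Fin.zero_le _), ha0] at h
    exact (hl h).elim
  | succ i ih =>
    rw [← Fin.coeSucc_eq_succ] at hk hl ⊢
    rcases hk.eq_or_lt with heq | hlt
    · rw [← heq] at hl ⊢
      rw [a.apply_symm_apply]
      refine lt_of_le_of_ne (Fin.le_last _) ?_
      rw [Ne, ← a.eq_symm_apply]
      exact (Fin.lt_add_one_iff.mpr (lt_of_le_of_ne (Fin.le_last _) hl)).ne'
    · have h₀ : a (i.castSucc + 1) ≠ 0 := by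
        rw [← ha0, a.injective.ne_iff, Fin.coeSucc_eq_succ]
        exact Fin.succ_ne_zero i
      have hl' : a (i.castSucc + 1) ≠ Fin.last n := by
        rw [Ne, ← a.eq_symm_apply]
        exact hlt.ne'
      have hi := ih (Fin.le_castSucc_iff.mpr (Fin.coeSucc_eq_succ ▸ hlt))
        (Fin.castSucc_lt_last i).ne
      exact ((apply_strictly_between_neighbours hc hacyc h₀ hl').resolve_left
        fun h ↦ hi.asymm h.1).1

lemma strictMonoOn_Iic_symm_last (hc : IsStdCoxeter n c) (ha0 : a 0 = 0)
    (hacyc : ∀ i, c (a i) = a (i + 1)) : StrictMonoOn a (Iic (a.symm (Fin.last n))) := by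
  refine strictMonoOn_Iic_of_lt_succ fun k hk ↦ ?_
  rw [Fin.orderSucc_eq_add_one (hk.trans_le (Fin.le_last _)).ne]
  exact apply_lt_apply_add_one hc ha0 hacyc k hk

lemma strictAntiOn_Ici_symm_last (hc : IsStdCoxeter n c) (ha0 : a 0 = 0)
    (hacyc : ∀ i, c (a i) = a (i + 1)) : StrictAntiOn a (Ici (a.symm (Fin.last n))) := by
  refine strictAntiOn_of_succ_lt ordConnected_Ici fun k hk hkm _ ↦ ?_
  have hl : k ≠ Fin.last n := by
    rintro rfl
    exact hk (isMax_iff_eq_top.mpr rfl)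
  rw [Fin.orderSucc_eq_add_one hl]
  exact apply_add_one_lt_apply hc ha0 hacyc k hkm hl

lemma lt_apply_of_symm_lt_symm_last (hc : IsStdCoxeter n c) (ha0 : a 0 = 0)
    (hacyc : ∀ i, c (a i) = a (i + 1)) {x : Fin (n+1)} (hx : a.symm x < a.symm (Fin.last n)) :
    x < c x := by
  have hk := Fin.lt_add_one_iff.mpr (hx.trans_le (Fin.le_last _))
  rw [← a.apply_symm_apply x, hacyc]
  exact strictMonoOn_Iic_symm_last hc ha0 hacyc (mem_Iic.mpr hx.le)
    (mem_Iic.mpr (Fin.add_one_le_of_lt hx)) hk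

lemma apply_lt_of_symm_last_lt_symm (hc : IsStdCoxeter n c) (ha0 : a 0 = 0)
    (hacyc : ∀ i, c (a i) = a (i + 1)) {x : Fin (n+1)} (hx₀ : 0 < x)
    (hx : a.symm (Fin.last n) < a.symm x) : c x < x := by
  rw [← a.apply_symm_apply x, hacyc]
  by_cases hl : a.symm x = Fin.last n
  · rwa [hl, Fin.last_add_one, ha0, ← hl, a.apply_symm_apply]
  · have hk := Fin.lt_add_one_iff.mpr (lt_of_le_of_ne (Fin.le_last _) hl)
    exact strictAntiOn_Ici_symm_last hc ha0 hacyc (mem_Ici.mpr hx.le)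
      (mem_Ici.mpr (hx.trans hk).le) hk

lemma charmedRel_iff_symm_last_mem_uIoo (hc : IsStdCoxeter n c) (ha0 : a 0 = 0)
    (hacyc : ∀ i, c (a i) = a (i + 1)) {i j : Fin (n+1)} (hi₀ : 0 < i) (hi : i < Fin.last n)
    (hj₀ : 0 < j) (hj : j < Fin.last n) :
    charmedRel n c i j ↔ a.symm (Fin.last n) ∈ uIoo (a.symm i) (a.symm j) := by
  have side : ∀ x, 0 < x → x < Fin.last n →
      (x < c x ↔ a.symm x < a.symm (Fin.last n)) ∧ (c x < x ↔ a.symm (Fin.last n) < a.symm x) := by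
    intro x hx₀ hx
    rcases (a.symm.injective.ne hx.ne).lt_or_gt with h | h
    · have hup := lt_apply_of_symm_lt_symm_last hc ha0 hacyc h
      exact ⟨iff_of_true hup h, iff_of_false hup.asymm h.asymm⟩
    · have hdown := apply_lt_of_symm_last_lt_symm hc ha0 hacyc hx₀ h
      exact ⟨iff_of_false hdown.asymm h.asymm, iff_of_true hdown h⟩
  rw [charmedRel, (side i hi₀ hi).1, (side i hi₀ hi).2, (side j hj₀ hj).1, (side j hj₀ hj).2,
    uIoo_eq_union, mem_union, mem_Ioo, mem_Ioo]
  tauto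

end CycleNotation

/-- A root `(i,j)` with `1 < i < j < n` is `c`-charmed iff the chord `(i,j)` crosses the
chord `(i-1, j+1)` when the points are arranged on a circle in the cyclic order given by
the cycle notation of `c`. -/
theorem stmt4 (n : ℕ) (c : Equiv.Perm (Fin (n+1))) (hc : IsStdCoxeter n c)
    (a : Fin (n+1) ≃ Fin (n+1)) (ha0 : a 0 = 0) (hacyc : ∀ i, c (a i) = a (i + 1)) :
    ∀ i j : Fin (n+1), 0 < i → i < j → j < Fin.last n →
      (charmedRel n c i j ↔ chordsCross a i j (i - 1) (j + 1)) := by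
  intro i j hi hij hj
  have hmono := strictMonoOn_Iic_symm_last hc ha0 hacyc
  have hanti := strictAntiOn_Ici_symm_last hc ha0 hacyc
  have hi' : i - 1 < i := Fin.sub_one_lt_iff.mpr hi
  have hj' : j < j + 1 := Fin.lt_add_one_iff.mpr hj
  rw [charmedRel_iff_symm_last_mem_uIoo hc ha0 hacyc hi (hij.trans hj) (hi.trans hij) hj,
    chordsCross_iff a hij.ne hi'.ne (hi'.trans hij).ne (hij.trans hj').ne' hj'.ne',
    ← symm_mem_uIoo_iff_of_lt hmono hanti (hij.trans hj') hj']
  simp [symm_notMem_uIoo_of_lt hmono hanti hi' (hi'.trans hij)]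
end

section
/- Let c be a standard Coxeter element of S_n, s_k = (k,k+1) initial in c, and c' = s_k c s_k. Write the cycle notation of c as (a_1,...,a_n) with a_1 = k and a_{k+1} = k+1. Then {a_1,...,a_k} = {1,...,k} and {a_{k+1},...,a_n} = {k+1,...,n}. -/
/-- The Coxeter length = number of inversions of a permutation. -/
def invLen {n : ℕ} (w : Equiv.Perm (Fin n)) : ℕ :=
  (Finset.univ.filter fun p : Fin n × Fin n => p.1 < p.2 ∧ w p.2 < w p.1).card

open Equiv Finset

section AdjSwap

variable {n : ℕ}

@[simp]
lemma adjSwap_apply_castSucc (k : Fin n) : adjSwap n k k.castSucc = k.succ :=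
  swap_apply_left _ _

@[simp]
lemma adjSwap_apply_succ (k : Fin n) : adjSwap n k k.succ = k.castSucc :=
  swap_apply_right _ _

lemma adjSwap_apply_of_ne_of_ne {k : Fin n} {x : Fin (n+1)} (h₀ : x ≠ k.castSucc)
    (h₁ : x ≠ k.succ) : adjSwap n k x = x :=
  swap_apply_of_ne_of_ne h₀ h₁

lemma adjSwap_lt_adjSwap {k : Fin n} {x y : Fin (n+1)} (hxy : x < y)
    (hne : ¬(x = k.castSucc ∧ y = k.succ)) : adjSwap n k x < adjSwap n k y := by
  unfold adjSwap
  rw [swap_apply_def, swap_apply_def]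
  split_ifs <;> simp only [Fin.lt_def, Fin.ext_iff, Fin.val_succ, Fin.val_castSucc] at * <;> omega

lemma invLen_le_invLen_adjSwap_mul {k : Fin n} {c : Perm (Fin (n+1))}
    (h : c⁻¹ k.castSucc < c⁻¹ k.succ) : invLen c ≤ invLen (adjSwap n k * c) := by
  unfold invLen
  refine card_le_card fun p hp => ?_
  rw [mem_filter] at hp ⊢
  refine ⟨mem_univ _, hp.2.1, adjSwap_lt_adjSwap hp.2.2 ?_⟩
  rintro ⟨h₂, h₁⟩
  rw [← h₂, ← h₁] at h
  simp only [Perm.coe_inv, symm_apply_apply] at h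
  exact h.not_gt hp.2.1

lemma inv_apply_succ_lt_of_invLen_adjSwap_mul_lt {k : Fin n} {c : Perm (Fin (n+1))}
    (h : invLen (adjSwap n k * c) < invLen c) : c⁻¹ k.succ < c⁻¹ k.castSucc :=
  (not_lt.1 fun h' => h.not_ge (invLen_le_invLen_adjSwap_mul h')).lt_of_ne
    (c⁻¹.injective.ne Fin.castSucc_lt_succ.ne')

end AdjSwap

def StabilizesIic {α : Type*} [Preorder α] (σ : Perm α) (y : α) : Prop :=
  ∀ x, σ x ≤ y ↔ x ≤ y

section Words

variable {n : ℕ}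

lemma adjSwap_stabilizesIic {i k : Fin n} (hik : i ≠ k) :
    StabilizesIic (adjSwap n i) k.castSucc := by
  intro x
  have : i.val ≠ k.val := Fin.val_ne_of_ne hik
  unfold adjSwap
  rw [swap_apply_def]
  split_ifs with h₀ h₁
  · simp only [h₀, Fin.le_def, Fin.val_succ, Fin.val_castSucc]; omega
  · simp only [h₁, Fin.le_def, Fin.val_succ, Fin.val_castSucc]; omega
  · rfl

lemma listProd_adjSwap_stabilizesIic {k : Fin n} {l : List (Fin n)} (hk : k ∉ l) :
    StabilizesIic (l.map (adjSwap n)).prod k.castSucc := by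
  refine List.prod_induction (StabilizesIic · k.castSucc)
    (fun σ τ hσ hτ x => (hσ _).trans (hτ x)) (fun _ => Iff.rfl) ?_
  simp only [List.mem_map]
  rintro _ ⟨i, hi, rfl⟩
  exact adjSwap_stabilizesIic (ne_of_mem_of_not_mem hi hk)

lemma listProd_adjSwap_apply_eq_self {l : List (Fin n)} {x : Fin (n+1)}
    (hx : ∀ i ∈ l, i.castSucc ≠ x ∧ i.succ ≠ x) : (l.map (adjSwap n)).prod x = x := by
  refine List.prod_induction (fun σ : Perm _ => σ x = x)
    (fun σ τ hσ hτ => by rw [Perm.mul_apply, hτ, hσ]) rfl ?_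
  simp only [List.mem_map]
  rintro _ ⟨i, hi, rfl⟩
  exact adjSwap_apply_of_ne_of_ne (hx i hi).1.symm (hx i hi).2.symm

/- `k` is moved only by `s_{k-1}` and `s_k`, and `k+1` only by `s_k` and `s_{k+1}`. -/
lemma listProd_adjSwap_apply_eq_self_or {k : Fin n} {l₁ l₂ : List (Fin n)}
    (hdisj : l₁.Disjoint l₂) (hk₁ : k ∉ l₁) (hk₂ : k ∉ l₂) {x : Fin (n+1)}
    (hx : x = k.castSucc ∨ x = k.succ) :
    (l₁.map (adjSwap n)).prod x = x ∨ (l₂.map (adjSwap n)).prod x = x := by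
  by_contra! hmoved
  obtain ⟨i, hi, hix⟩ : ∃ i ∈ l₁, i.castSucc = x ∨ i.succ = x := by
    by_contra! h
    exact hmoved.1 (listProd_adjSwap_apply_eq_self h)
  obtain ⟨j, hj, hjx⟩ : ∃ j ∈ l₂, j.castSucc = x ∨ j.succ = x := by
    by_contra! h
    exact hmoved.2 (listProd_adjSwap_apply_eq_self h)
  have hij : i ≠ j := fun h => hdisj hi (h ▸ hj)
  have hik : i ≠ k := ne_of_mem_of_not_mem hi hk₁
  have hjk : j ≠ k := ne_of_mem_of_not_mem hj hk₂
  simp only [Fin.ext_iff, Fin.val_succ, Fin.val_castSucc, ne_eq] at *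
  omega

lemma IsStdCoxeter.exists_eq_mul_adjSwap_mul {c : Perm (Fin (n+1))} (hc : IsStdCoxeter n c)
    (k : Fin n) : ∃ l₁ l₂ : List (Fin n), l₁.Disjoint l₂ ∧ k ∉ l₁ ∧ k ∉ l₂ ∧
      c = (l₁.map (adjSwap n)).prod * adjSwap n k * (l₂.map (adjSwap n)).prod := by
  obtain ⟨l, hnd, hl, rfl⟩ := hc
  obtain ⟨l₁, l₂, rfl⟩ := List.append_of_mem (hl k)
  obtain ⟨hk, hnd⟩ := List.nodup_cons.1 (List.nodup_middle.1 hnd)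
  rw [List.mem_append, not_or] at hk
  exact ⟨l₁, l₂, List.disjoint_of_nodup_append hnd, hk.1, hk.2, by simp [mul_assoc]⟩

end Words

section Blocks

variable {n : ℕ} {k : Fin n} {A B : Perm (Fin (n+1))}

lemma eq_castSucc_of_le_of_not_le (hA : StabilizesIic A k.castSucc)
    (hB : StabilizesIic B k.castSucc) {x : Fin (n+1)} (hx : x ≤ k.castSucc)
    (hcx : ¬ (A * adjSwap n k * B) x ≤ k.castSucc) : B x = k.castSucc := by
  by_contra hne
  have hBx : B x ≤ k.castSucc := (hB x).2 hx
  rw [Perm.mul_apply, Perm.mul_apply,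
    adjSwap_apply_of_ne_of_ne hne (hBx.trans_lt Fin.castSucc_lt_succ).ne] at hcx
  exact hcx ((hA _).2 hBx)

lemma eq_succ_of_not_le_of_le (hA : StabilizesIic A k.castSucc)
    (hB : StabilizesIic B k.castSucc) {x : Fin (n+1)} (hx : ¬ x ≤ k.castSucc)
    (hcx : (A * adjSwap n k * B) x ≤ k.castSucc) : B x = k.succ := by
  by_contra hne
  have hBx : ¬ B x ≤ k.castSucc := fun h => hx ((hB x).1 h)
  rw [Perm.mul_apply, Perm.mul_apply,
    adjSwap_apply_of_ne_of_ne (fun h => hBx h.le) hne] at hcx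
  exact hBx ((hA _).1 hcx)

lemma apply_castSucc_eq_of_descent (hA : StabilizesIic A k.castSucc)
    (hB : StabilizesIic B k.castSucc) (hBk : B k.castSucc = k.castSucc)
    (hdesc : (A * adjSwap n k * B)⁻¹ k.succ < (A * adjSwap n k * B)⁻¹ k.castSucc) :
    A k.castSucc = k.castSucc := by
  set c := A * adjSwap n k * B
  set p := c⁻¹ k.succ
  set q := c⁻¹ k.castSucc
  have hcp : c p = k.succ := c.apply_symm_apply _
  have hcq : c q = k.castSucc := c.apply_symm_apply _
  by_contra hAk
  have hq : q ≤ k.castSucc := by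
    by_contra hq
    rw [Perm.mul_apply, Perm.mul_apply, eq_succ_of_not_le_of_le hA hB hq hcq.le,
      adjSwap_apply_succ] at hcq
    exact hAk hcq
  have hBp := eq_castSucc_of_le_of_not_le hA hB (hdesc.le.trans hq)
    (hcp ▸ Fin.castSucc_lt_succ.not_ge)
  have hp : p = k.castSucc := B.injective (hBp.trans hBk.symm)
  exact (hp ▸ hdesc).not_ge hq

lemma apply_succ_eq_of_descent (hA : StabilizesIic A k.castSucc)
    (hB : StabilizesIic B k.castSucc) (hBk : B k.succ = k.succ)
    (hdesc : (A * adjSwap n k * B)⁻¹ k.succ < (A * adjSwap n k * B)⁻¹ k.castSucc) :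
    A k.succ = k.succ := by
  set c := A * adjSwap n k * B
  set p := c⁻¹ k.succ
  set q := c⁻¹ k.castSucc
  have hcp : c p = k.succ := c.apply_symm_apply _
  have hcq : c q = k.castSucc := c.apply_symm_apply _
  by_contra hAk
  have hp : ¬ p ≤ k.castSucc := by
    intro hp
    rw [Perm.mul_apply, Perm.mul_apply,
      eq_castSucc_of_le_of_not_le hA hB hp (hcp ▸ Fin.castSucc_lt_succ.not_ge),
      adjSwap_apply_castSucc] at hcp
    exact hAk hcp
  have hBq := eq_succ_of_not_le_of_le hA hB (fun h => hp (hdesc.le.trans h)) hcq.le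
  have hq : q = k.succ := B.injective (hBq.trans hBk.symm)
  exact hp (Fin.le_castSucc_iff.2 (hq ▸ hdesc))

end Blocks

lemma Fin.apply_iff_val_lt_card_of_antitone {N : ℕ} {f : Fin N → Prop} [DecidablePred f]
    (hf : Antitone f) (i : Fin N) : f i ↔ i.val < #(univ.filter f) := by
  constructor
  · intro hi
    calc i.val < #(Iic i) := by simp
      _ ≤ #(univ.filter f) :=
        card_le_card fun j hj => mem_filter.2 ⟨mem_univ _, hf (mem_Iic.1 hj) hi⟩
  · intro hi
    by_contra hni
    have : #(univ.filter f) ≤ #(Iio i) := card_le_card fun j hj =>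
      mem_Iio.2 (lt_of_not_ge fun hij => hni (hf hij (mem_filter.1 hj).2))
    simp only [Fin.card_Iio] at this
    omega

/- Antitone as a `Prop`-valued map: once the cycle has left `p` it never returns. -/
lemma antitone_of_cycle {α : Type*} {m : ℕ} {c : Perm α} {a : Fin (m+1) ≃ α}
    (hacyc : ∀ i, c (a i) = a (i + 1)) {p : α → Prop}
    (hentry : ∀ x, ¬ p x → p (c x) → c x = a 0) : Antitone fun i => p (a i) := by
  refine Fin.antitone_iff_succ_le.2 fun i hsucc => ?_
  by_contra h
  rw [← Fin.coeSucc_eq_succ, ← hacyc] at hsucc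
  have h0 := hentry _ h hsucc
  rw [hacyc, Fin.coeSucc_eq_succ] at h0
  exact Fin.succ_ne_zero i (a.injective h0)

section Cycle

variable {n : ℕ} {k : Fin n} {A B : Perm (Fin (n+1))} {a : Fin (n+1) ≃ Fin (n+1)}

lemma le_castSucc_iff_of_cycle (hA : StabilizesIic A k.castSucc)
    (hB : StabilizesIic B k.castSucc) (hAk : A k.castSucc = k.castSucc)
    (ha0 : a 0 = k.castSucc) (hacyc : ∀ i, (A * adjSwap n k * B) (a i) = a (i + 1))
    (i : Fin (n+1)) : a i ≤ k.castSucc ↔ i ≤ k.castSucc := by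
  have hentry : ∀ x, ¬ x ≤ k.castSucc → (A * adjSwap n k * B) x ≤ k.castSucc →
      (A * adjSwap n k * B) x = a 0 := fun x hx hcx => by
    rw [ha0, Perm.mul_apply, Perm.mul_apply, eq_succ_of_not_le_of_le hA hB hx hcx,
      adjSwap_apply_succ, hAk]
  have hcard : #(univ.filter fun i => a i ≤ k.castSucc) = k.val + 1 := by
    rw [card_equiv (t := Iic k.castSucc) a fun i => by simp, Fin.card_Iic, Fin.val_castSucc]
  rw [Fin.apply_iff_val_lt_card_of_antitone (antitone_of_cycle hacyc hentry), hcard,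
    Fin.le_def, Fin.val_castSucc]
  omega

lemma apply_succ_eq_of_cycle (hA : StabilizesIic A k.castSucc)
    (hB : StabilizesIic B k.castSucc) (hAk : A k.succ = k.succ)
    (hblock : ∀ i, a i ≤ k.castSucc ↔ i ≤ k.castSucc)
    (hacyc : ∀ i, (A * adjSwap n k * B) (a i) = a (i + 1)) : a k.succ = k.succ := by
  have hstep : (A * adjSwap n k * B) (a k.castSucc) = a k.succ := by
    rw [hacyc, Fin.coeSucc_eq_succ]
  have hexit : ¬ (A * adjSwap n k * B) (a k.castSucc) ≤ k.castSucc :=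
    hstep ▸ fun h => Fin.castSucc_lt_succ.not_ge ((hblock _).1 h)
  rw [← hstep, Perm.mul_apply, Perm.mul_apply,
    eq_castSucc_of_le_of_not_le hA hB ((hblock _).2 le_rfl) hexit, adjSwap_apply_castSucc, hAk]

end Cycle

/-- Let `c` be a standard Coxeter element of `S_{n+1}` with `s_k` initial in `c`, and
write the cycle notation of `c` as `(a₁, …)` starting at `a₁ = k` (formally: `a` is a
bijection with `a 0 = k` and `c (a i) = a (i+1)` cyclically).  Then the entry at index
`k+1` is `k+1`, the first `k+1` entries are exactly `{1, …, k+1}` (the elements `≤ k`),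
and the remaining entries are exactly the elements `> k`. -/
theorem stmt16 (n : ℕ) (c : Equiv.Perm (Fin (n+1))) (hc : IsStdCoxeter n c)
    (k : Fin n) (hk : invLen (adjSwap n k * c) < invLen c)
    (a : Fin (n+1) ≃ Fin (n+1)) (ha0 : a 0 = k.castSucc)
    (hacyc : ∀ i, c (a i) = a (i + 1)) :
    a k.succ = k.succ ∧ ∀ i : Fin (n+1), (a i ≤ k.castSucc ↔ i ≤ k.castSucc) := by
  obtain ⟨l₁, l₂, hdisj, hk₁, hk₂, rfl⟩ := hc.exists_eq_mul_adjSwap_mul k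
  have hA := listProd_adjSwap_stabilizesIic hk₁
  have hB := listProd_adjSwap_stabilizesIic hk₂
  have hdesc := inv_apply_succ_lt_of_invLen_adjSwap_mul_lt hk
  have hAk := (listProd_adjSwap_apply_eq_self_or hdisj hk₁ hk₂ (.inl rfl)).elim id
    fun hBk => apply_castSucc_eq_of_descent hA hB hBk hdesc
  have hAk' := (listProd_adjSwap_apply_eq_self_or hdisj hk₁ hk₂ (.inr rfl)).elim id
    fun hBk => apply_succ_eq_of_descent hA hB hBk hdesc
  have hblock := le_castSucc_iff_of_cycle hA hB hAk ha0 hacyc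
  exact ⟨apply_succ_eq_of_cycle hA hB hAk' hblock hacyc, hblock⟩
end
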